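/- arXiv:2103.02351 — 4 statements merged into one kernel-verified Lean document; each statement's English description precedes it below -/
import Mathlib

section
/- Let T ∈ ℕ, let γ > 0, c ≥ 0, L > 0 be reals and τ ≥ 1 a natural number, and let (r_t)_{t=0}^{T+1}, (s_t)_{t=0}^{T}, (R_t)_{t=0}^{T} be nonnegative real sequences such that for every t ∈ {0, …, T}: (1/4)·s_t ≤ (r_t − r_{t+1})/(4γ) + γc/8 + (L²/2)·R_t, and R_t ≤ (1/(30L²τ)) ∑_{k=max(t−τ,0)}^{t−1} s_k + γc/(6L²). Then (1/(5(T+1))) ∑_{t=0}^{T} s_t ≤ r_0/(4γ(T+1)) + γc/4. -/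
/-!
Substituting the bound on `R t` into the descent inequality gives, after multiplying by `4`,
`s t ≤ (r t - r (t + 1)) / γ + 5 γ c / 6 + (1 / (15 τ)) ∑_{k ∈ [t - τ, t)} s k`.
Summed over `t ≤ T`, the `r`-terms telescope, and each `s k` lies in at most `τ` of the windows
`[t - τ, t)`, so the window terms contribute at most `(1 / 15) ∑ s`. This is absorbed into the
left-hand side, leaving `(14 / 15) ∑ s ≤ r 0 / γ + 5 (T + 1) γ c / 6`.
-/

open Finset

theorem sum_range_sum_Ico_sub_le_nsmul {M : Type*} [AddCommMonoid M] [PartialOrder M]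
    [IsOrderedAddMonoid M] {s : ℕ → M} {n : ℕ} (τ : ℕ) (hs : ∀ k < n, 0 ≤ s k) :
    ∑ t ∈ range n, ∑ k ∈ Ico (t - τ) t, s k ≤ τ • ∑ k ∈ range n, s k := by
  rw [sum_comm' (t' := range n) (s' := fun k => (range n).filter (fun t => k ∈ Ico (t - τ) t))
    (fun t k => by simp only [mem_filter, mem_range, mem_Ico]; omega), smul_sum]
  refine sum_le_sum fun k hk => ?_
  rw [sum_const]
  refine nsmul_le_nsmul_left (hs k (mem_range.mp hk)) ?_
  calc #((range n).filter (fun t => k ∈ Ico (t - τ) t))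
      ≤ #(Ico (k + 1) (k + 1 + τ)) :=
        card_le_card fun t ht => by simp only [mem_filter, mem_range, mem_Ico] at ht ⊢; omega
    _ = τ := by simp

theorem sum_le_of_descent_with_window {n τ : ℕ} (hτ : 0 < τ) {a b : ℝ} (ha : 0 ≤ a)
    {r s : ℕ → ℝ} (hs : ∀ t < n, 0 ≤ s t)
    (h : ∀ t < n, s t ≤ r t - r (t + 1) + b + a / τ * ∑ k ∈ Ico (t - τ) t, s k) :
    (1 - a) * ∑ t ∈ range n, s t ≤ r 0 - r n + n * b := by
  have hwindow := sum_range_sum_Ico_sub_le_nsmul τ hs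
  rw [nsmul_eq_mul] at hwindow
  have hτ' : (0 : ℝ) < τ := Nat.cast_pos.mpr hτ
  calc (1 - a) * ∑ t ∈ range n, s t
      = ∑ t ∈ range n, s t - a / τ * (τ * ∑ t ∈ range n, s t) := by field_simp
    _ ≤ ∑ t ∈ range n, s t - a / τ * ∑ t ∈ range n, ∑ k ∈ Ico (t - τ) t, s k := by
        gcongr
    _ ≤ ∑ t ∈ range n, (r t - r (t + 1) + b + a / τ * ∑ k ∈ Ico (t - τ) t, s k)
          - a / τ * ∑ t ∈ range n, ∑ k ∈ Ico (t - τ) t, s k := by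
        gcongr with t ht
        exact h t (mem_range.mp ht)
    _ = r 0 - r n + n * b := by
        rw [sum_add_distrib, sum_add_distrib, sum_range_sub', sum_const, card_range, nsmul_eq_mul,
          ← mul_sum]
        ring

theorem telescoping_lemma_general (T : ℕ) (γ c L : ℝ) (τ : ℕ)
    (hγ : 0 < γ) (hc : 0 ≤ c) (hL : 0 < L) (hτ : 1 ≤ τ)
    (r s R : ℕ → ℝ)
    (hr : ∀ t ≤ T + 1, 0 ≤ r t) (hs : ∀ t ≤ T, 0 ≤ s t)
    (h1 : ∀ t ≤ T, (1 / 4) * s t ≤ (r t - r (t + 1)) / (4 * γ) + γ * c / 8 + (L ^ 2 / 2) * R t)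
    (h2 : ∀ t ≤ T, R t ≤ (1 / (30 * L ^ 2 * τ)) * ∑ k ∈ Finset.Ico (t - τ) t, s k
        + γ * c / (6 * L ^ 2)) :
    (1 / (5 * (T + 1))) * ∑ t ∈ Finset.range (T + 1), s t ≤
      r 0 / (4 * γ * (T + 1)) + γ * c / 4 := by
  have hstep : ∀ t < T + 1, s t ≤ r t / γ - r (t + 1) / γ + 5 * γ * c / 6
      + (1 / 15) / τ * ∑ k ∈ Ico (t - τ) t, s k := by
    intro t ht
    have hdescent := h1 t (Nat.lt_succ_iff.mp ht)
    have hdrift : L ^ 2 / 2 * R t ≤ (1 / 15) / τ * (∑ k ∈ Ico (t - τ) t, s k) / 4 + γ * c / 12 :=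
      calc L ^ 2 / 2 * R t
          ≤ L ^ 2 / 2 * ((1 / (30 * L ^ 2 * τ)) * ∑ k ∈ Ico (t - τ) t, s k
              + γ * c / (6 * L ^ 2)) := by gcongr; exact h2 t (Nat.lt_succ_iff.mp ht)
        _ = _ := by field_simp; ring
    linear_combination 4 * hdescent + 4 * hdrift
  have hsum := sum_le_of_descent_with_window hτ (by norm_num) (fun t ht => hs t (by omega)) hstep
  have hr0 : 0 ≤ r 0 / γ := div_nonneg (hr 0 (by omega)) hγ.le
  have hrT : 0 ≤ r (T + 1) / γ := div_nonneg (hr (T + 1) le_rfl) hγ.le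
  have hγc : 0 ≤ (T + 1 : ℝ) * (γ * c) := by positivity
  have hS : ∑ t ∈ range (T + 1), s t ≤ 5 / 4 * (r 0 / γ) + 5 / 4 * ((T + 1) * (γ * c)) := by
    push_cast at hsum
    linarith
  calc (1 / (5 * (T + 1))) * ∑ t ∈ range (T + 1), s t
      ≤ (1 / (5 * (T + 1))) * (5 / 4 * (r 0 / γ) + 5 / 4 * ((T + 1) * (γ * c))) := by gcongr
    _ = r 0 / (4 * γ * (T + 1)) + γ * c / 4 := by field_simp

/-- Telescoping lemma (final step of the non-convex convergence proof). -/
theorem telescoping_lemma (T : ℕ) (γ c L : ℝ) (τ : ℕ)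
    (hγ : 0 < γ) (hc : 0 ≤ c) (hL : 0 < L) (hτ : 1 ≤ τ)
    (r s R : ℕ → ℝ)
    (hr : ∀ t ≤ T + 1, 0 ≤ r t) (hs : ∀ t ≤ T, 0 ≤ s t) (hR : ∀ t ≤ T, 0 ≤ R t)
    (h1 : ∀ t ≤ T, (1 / 4) * s t ≤ (r t - r (t + 1)) / (4 * γ) + γ * c / 8 + (L ^ 2 / 2) * R t)
    (h2 : ∀ t ≤ T, R t ≤ (1 / (30 * L ^ 2 * τ)) * ∑ k ∈ Finset.Ico (t - τ) t, s k
        + γ * c / (6 * L ^ 2)) :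
    (1 / (5 * (T + 1))) * ∑ t ∈ Finset.range (T + 1), s t ≤
      r 0 / (4 * γ * (T + 1)) + γ * c / 4 :=
  telescoping_lemma_general T γ c L τ hγ hc hL hτ r s R hr hs h1 h2
end

section
/- Let g be a random vector in ℝ^d on a probability space such that g and ‖g‖² are integrable, and suppose that for every coordinate v ∈ {1, …, d} the probability that the v-th coordinate of g is nonzero is at most Δ. Then ‖E[g]‖² ≤ Δ · E[‖g‖²]. -/
/-!
Coordinatewise, `‖E g‖² = ∑ᵥ (E gᵥ)²` and `E ‖g‖² = ∑ᵥ E gᵥ²`, so it suffices to show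
`(E f)² ≤ P(f ≠ 0) · E f²` for a real random variable `f`. This is Cauchy–Schwarz for `f` against
the indicator of `{f ≠ 0}`, i.e. against `1` for the measure restricted to `{f ≠ 0}`; the
restricted measure is finite precisely because of the sparsity bound.
-/

open MeasureTheory

namespace MeasureTheory

variable {Ω : Type*} [MeasurableSpace Ω] {μ : Measure Ω} {f : Ω → ℝ}

theorem sq_integral_le_measureReal_univ_mul_integral_sq [IsFiniteMeasure μ]
    (hf : Integrable f μ) (hf2 : Integrable (fun ω => f ω ^ 2) μ) :
    (∫ ω, f ω ∂μ) ^ 2 ≤ μ.real Set.univ * ∫ ω, f ω ^ 2 ∂μ := by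
  -- `∫ (f - t)² ≥ 0` for every `t`: a nonnegative quadratic in `t` has nonpositive discriminant.
  have hquad : ∀ t : ℝ,
      0 ≤ μ.real Set.univ * (t * t) + (-2 * ∫ ω, f ω ∂μ) * t + ∫ ω, f ω ^ 2 ∂μ := by
    intro t
    have hexpand : ∫ ω, (f ω - t) ^ 2 ∂μ =
        μ.real Set.univ * (t * t) + (-2 * ∫ ω, f ω ∂μ) * t + ∫ ω, f ω ^ 2 ∂μ := by
      simp_rw [sub_sq]
      have hlin : Integrable (fun ω => 2 * f ω * t) μ := (hf.const_mul 2).mul_const t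
      rw [integral_add (by exact hf2.sub hlin) (integrable_const _), integral_sub hf2 hlin,
        integral_mul_const, integral_const_mul, integral_const, smul_eq_mul]
      ring
    exact hexpand ▸ integral_nonneg fun ω => sq_nonneg _
  have := discrim_le_zero hquad
  rw [discrim] at this
  linarith

theorem sq_integral_le_measureReal_ne_zero_mul_integral_sq
    (hfin : μ {ω | f ω ≠ 0} ≠ ⊤) (hf : Integrable f μ) (hf2 : Integrable (fun ω => f ω ^ 2) μ) :
    (∫ ω, f ω ∂μ) ^ 2 ≤ μ.real {ω | f ω ≠ 0} * ∫ ω, f ω ^ 2 ∂μ := by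
  set A := {ω | f ω ≠ 0}
  have : IsFiniteMeasure (μ.restrict A) := isFiniteMeasure_restrict.mpr hfin
  have hvanish {h : Ω → ℝ} (hzero : ∀ ω, f ω = 0 → h ω = 0) : ∫ ω in A, h ω ∂μ = ∫ ω, h ω ∂μ :=
    setIntegral_eq_integral_of_forall_compl_eq_zero fun ω hω => hzero ω (not_not.mp hω)
  have := sq_integral_le_measureReal_univ_mul_integral_sq (μ := μ.restrict A)
    hf.restrict hf2.restrict
  rwa [hvanish fun ω h => h, hvanish fun ω h => by simp [h], measureReal_restrict_apply_univ]
    at this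

theorem sq_integral_le_mul_integral_sq_of_measure_ne_zero_le {Δ : ℝ}
    (hΔ : μ {ω | f ω ≠ 0} ≤ ENNReal.ofReal Δ) (hf : Integrable f μ)
    (hf2 : Integrable (fun ω => f ω ^ 2) μ) :
    (∫ ω, f ω ∂μ) ^ 2 ≤ Δ * ∫ ω, f ω ^ 2 ∂μ := by
  rcases le_or_gt 0 Δ with hΔ0 | hΔ0
  · calc (∫ ω, f ω ∂μ) ^ 2 ≤ μ.real {ω | f ω ≠ 0} * ∫ ω, f ω ^ 2 ∂μ :=
          sq_integral_le_measureReal_ne_zero_mul_integral_sq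
            (ne_top_of_le_ne_top ENNReal.ofReal_ne_top hΔ) hf hf2
      _ ≤ Δ * ∫ ω, f ω ^ 2 ∂μ :=
          mul_le_mul_of_nonneg_right (ENNReal.toReal_le_of_le_ofReal hΔ0 hΔ)
            (integral_nonneg fun ω => sq_nonneg _)
  · have hzero : ∀ᵐ ω ∂μ, f ω = 0 := by
      rw [ae_iff]
      simpa [ENNReal.ofReal_of_nonpos hΔ0.le] using hΔ
    have hzero_sq : ∀ᵐ ω ∂μ, f ω ^ 2 = 0 := by filter_upwards [hzero] with ω h; simp [h]
    rw [integral_eq_zero_of_ae hzero, integral_eq_zero_of_ae hzero_sq]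
    simp

end MeasureTheory

theorem norm_sq_integral_le_of_sparse_general
    {Ω : Type*} [MeasurableSpace Ω] (P : Measure Ω)
    {d : ℕ} (g : Ω → EuclideanSpace ℝ (Fin d))
    (hg : Integrable g P) (hg2 : Integrable (fun ω => ‖g ω‖ ^ 2) P)
    (Δ : ℝ) (hΔ : ∀ v : Fin d, P {ω | g ω v ≠ 0} ≤ ENNReal.ofReal Δ) :
    ‖∫ ω, g ω ∂P‖ ^ 2 ≤ Δ * ∫ ω, ‖g ω‖ ^ 2 ∂P := by
  have hcoord (v : Fin d) : Integrable (fun ω => g ω v) P := hg.eval_piLp v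
  have hcoord_sq (v : Fin d) : Integrable (fun ω => g ω v ^ 2) P :=
    ((memLp_two_iff_integrable_sq_norm hg.1).mpr hg2 |>.eval_piLp v).integrable_sq
  calc ‖∫ ω, g ω ∂P‖ ^ 2 = ∑ v, (∫ ω, g ω v ∂P) ^ 2 := by
        simp_rw [EuclideanSpace.real_norm_sq_eq, eval_integral_piLp hcoord]
    _ ≤ ∑ v, Δ * ∫ ω, g ω v ^ 2 ∂P := Finset.sum_le_sum fun v _ =>
        sq_integral_le_mul_integral_sq_of_measure_ne_zero_le (hΔ v) (hcoord v) (hcoord_sq v)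
    _ = Δ * ∫ ω, ‖g ω‖ ^ 2 ∂P := by
        simp_rw [← Finset.mul_sum, EuclideanSpace.real_norm_sq_eq,
          integral_finsetSum _ fun v _ => hcoord_sq v]

/-- If each coordinate of a random vector `g` in `ℝ^d` is nonzero with probability
at most `Δ`, then `‖E g‖² ≤ Δ · E ‖g‖²`. -/
theorem norm_sq_integral_le_of_sparse
    {Ω : Type*} [MeasurableSpace Ω] (P : Measure Ω) [IsProbabilityMeasure P]
    {d : ℕ} (g : Ω → EuclideanSpace ℝ (Fin d))
    (hg : Integrable g P) (hg2 : Integrable (fun ω => ‖g ω‖ ^ 2) P)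
    (Δ : ℝ) (hΔ : ∀ v : Fin d, P {ω | g ω v ≠ 0} ≤ ENNReal.ofReal Δ) :
    ‖∫ ω, g ω ∂P‖ ^ 2 ≤ Δ * ∫ ω, ‖g ω‖ ^ 2 ∂P :=
  norm_sq_integral_le_of_sparse_general P g hg hg2 Δ hΔ
end

section
/- Let g be a random vector in ℝ^d on a probability space such that g and ‖g‖² are integrable, suppose that for every coordinate v ∈ {1, …, d} the probability that the v-th coordinate of g is nonzero is at most Δ, with 0 < Δ ≤ 1, and let m = E[g]. Then E‖g − m‖² ≥ ((1 − Δ)/Δ) · ‖m‖². -/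
/-!
Fix a coordinate `v` and let `S = {g v ≠ 0}`. Jensen's inequality on `S` (equivalently,
Cauchy–Schwarz against `1_S`) gives `(E g_v)² ≤ P(S) · E g_v² ≤ Δ · E g_v²`, so
`Var g_v = E g_v² - (E g_v)² ≥ ((1 - Δ)/Δ) (E g_v)²`. Summing over the coordinates, the
variances add up to `E‖g - m‖²` and the squared means to `‖m‖²`.
-/

open MeasureTheory ProbabilityTheory

section

variable {α : Type*} [MeasurableSpace α] {μ : Measure α}

lemma sq_integral_le_measureReal_support_mul_integral_sq {f : α → ℝ}
    (hf : Integrable f μ) (hf2 : Integrable (fun x => f x ^ 2) μ)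
    (hS : μ {x | f x ≠ 0} ≠ ⊤) :
    (∫ x, f x ∂μ) ^ 2 ≤ μ.real {x | f x ≠ 0} * ∫ x, f x ^ 2 ∂μ := by
  set S := {x | f x ≠ 0}
  have hzero : ∀ x, x ∉ S → f x = 0 := fun x hx => not_not.1 hx
  rw [← setIntegral_eq_integral_of_forall_compl_eq_zero hzero,
    ← setIntegral_eq_integral_of_forall_compl_eq_zero (s := S) (f := fun x => f x ^ 2)
      fun x hx => by simp [hzero x hx]]
  rcases eq_or_ne (μ S) 0 with h0 | h0
  · simp [Measure.restrict_eq_zero.2 h0]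
  have hpos : 0 < μ.real S := ENNReal.toReal_pos h0 hS
  have jensen := ((even_two.convexOn_pow (𝕜 := ℝ)).set_average_mem_epigraph
    (continuous_pow 2).continuousOn isClosed_univ h0 hS (by simp) hf.integrableOn
    hf2.integrableOn).2
  simp only [setAverage_eq, smul_eq_mul, mul_pow] at jensen
  rw [inv_pow, sq, mul_inv, mul_assoc, mul_le_mul_iff_right₀ (inv_pos.2 hpos),
    inv_mul_le_iff₀ hpos] at jensen
  exact jensen

end

section

variable {Ω : Type*} [MeasurableSpace Ω] {P : Measure Ω}

lemma mul_sq_integral_le_variance_of_measure_ne_zero_le [IsProbabilityMeasure P] {X : Ω → ℝ}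
    (hX : MemLp X 2 P) {Δ : ℝ} (hΔ : 0 < Δ) (hsupp : P {ω | X ω ≠ 0} ≤ ENNReal.ofReal Δ) :
    (1 - Δ) / Δ * P[X] ^ 2 ≤ Var[X; P] := by
  have hsq : P[X] ^ 2 ≤ Δ * P[X ^ 2] :=
    calc P[X] ^ 2 ≤ P.real {ω | X ω ≠ 0} * P[X ^ 2] :=
          sq_integral_le_measureReal_support_mul_integral_sq (hX.integrable one_le_two)
            hX.integrable_sq (measure_ne_top P _)
      _ ≤ Δ * P[X ^ 2] := by
          gcongr
          · exact integral_nonneg fun ω => sq_nonneg (X ω)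
          · exact ENNReal.toReal_le_of_le_ofReal hΔ.le hsupp
  rw [variance_eq_sub hX, div_mul_eq_mul_div, div_le_iff₀ hΔ]
  linarith

lemma integral_norm_sub_integral_sq_eq_sum_variance [IsFiniteMeasure P] {ι : Type*}
    [Fintype ι] {g : Ω → EuclideanSpace ℝ ι} (hg : MemLp g 2 P) :
    ∫ ω, ‖g ω - ∫ ω', g ω' ∂P‖ ^ 2 ∂P = ∑ i, Var[fun ω => g ω i; P] := by
  have hgi : ∀ i, MemLp (fun ω => g ω i) 2 P := hg.eval_piLp
  simp_rw [EuclideanSpace.real_norm_sq_eq, PiLp.sub_apply,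
    eval_integral_piLp (fun i => (hgi i).integrable one_le_two)]
  rw [integral_finsetSum _ fun i _ => by exact ((hgi i).sub (memLp_const _)).integrable_sq]
  exact Finset.sum_congr rfl fun i _ =>
    (variance_eq_integral (hgi i).aestronglyMeasurable.aemeasurable).symm

end

theorem variance_lower_bound_of_sparse_general
    {Ω : Type*} [MeasurableSpace Ω] (P : Measure Ω) [IsProbabilityMeasure P]
    {d : ℕ} (g : Ω → EuclideanSpace ℝ (Fin d))
    (hg : Integrable g P) (hg2 : Integrable (fun ω => ‖g ω‖ ^ 2) P)
    (Δ : ℝ) (hΔ0 : 0 < Δ)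
    (hΔ : ∀ v : Fin d, P {ω | g ω v ≠ 0} ≤ ENNReal.ofReal Δ)
    (m : EuclideanSpace ℝ (Fin d)) (hm : m = ∫ ω, g ω ∂P) :
    ((1 - Δ) / Δ) * ‖m‖ ^ 2 ≤ ∫ ω, ‖g ω - m‖ ^ 2 ∂P := by
  have hL2 : MemLp g 2 P := (memLp_two_iff_integrable_sq_norm hg.1).2 hg2
  have hmean : ∀ v, m v = ∫ ω, g ω v ∂P := fun v => hm ▸
    eval_integral_piLp (fun i => (hL2.eval_piLp i).integrable one_le_two) v
  rw [hm, integral_norm_sub_integral_sq_eq_sum_variance hL2, ← hm,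
    EuclideanSpace.real_norm_sq_eq, Finset.mul_sum]
  gcongr with v
  rw [hmean v]
  exact mul_sq_integral_le_variance_of_measure_ne_zero_le (hL2.eval_piLp v) hΔ0 (hΔ v)

/-- A `Δ`-sparse random vector `g` in `ℝ^d` with mean `m = E g` has variance at least
`((1 - Δ)/Δ) · ‖m‖²`. -/
theorem variance_lower_bound_of_sparse
    {Ω : Type*} [MeasurableSpace Ω] (P : Measure Ω) [IsProbabilityMeasure P]
    {d : ℕ} (g : Ω → EuclideanSpace ℝ (Fin d))
    (hg : Integrable g P) (hg2 : Integrable (fun ω => ‖g ω‖ ^ 2) P)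
    (Δ : ℝ) (hΔ0 : 0 < Δ) (hΔ1 : Δ ≤ 1)
    (hΔ : ∀ v : Fin d, P {ω | g ω v ≠ 0} ≤ ENNReal.ofReal Δ)
    (m : EuclideanSpace ℝ (Fin d)) (hm : m = ∫ ω, g ω ∂P) :
    ((1 - Δ) / Δ) * ‖m‖ ^ 2 ≤ ∫ ω, ‖g ω - m‖ ^ 2 ∂P :=
  variance_lower_bound_of_sparse_general P g hg hg2 Δ hΔ0 hΔ m hm
end

section
/- Let G, V : ℝ^d → ℝ be nonnegative functions, let ε̂ > 0, and define the estimator b̂(y) = 1 + V(y)/(G(y) + ε̂). Fix x ∈ ℝ^d and set ε̃ = max{ε̂, G(x)}. Define σ⋆² = sup{ V(y) : G(y) ≤ ε̃ } and M = sup{ V(y)/G(y) : G(y) > ε̃ } (suprema over empty sets taken to be 0), and assume sup_{y ∈ ℝ^d} b̂(y) is finite. Then 1 + σ⋆²/ε̃ + M ≤ 4 · sup_{y ∈ ℝ^d} b̂(y). -/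
/-- Lower bound on the critical-batch-size estimator: with `b̂(y) = 1 + V(y)/(G(y) + ε̂)`,
`ε̃ = max{ε̂, G(x)}`, `σ⋆² = sup{V(y) : G(y) ≤ ε̃}` and `M = sup{V(y)/G(y) : G(y) > ε̃}`
(suprema over empty sets taken to be `0`), one has `1 + σ⋆²/ε̃ + M ≤ 4 · sup_y b̂(y)`. -/
theorem estimator_lower_bound
    {d : ℕ} (G V : EuclideanSpace ℝ (Fin d) → ℝ)
    (hG : ∀ y, 0 ≤ G y) (hV : ∀ y, 0 ≤ V y)
    (εhat : ℝ) (hεhat : 0 < εhat)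
    (bhat : EuclideanSpace ℝ (Fin d) → ℝ)
    (hbhat : ∀ y, bhat y = 1 + V y / (G y + εhat))
    (x : EuclideanSpace ℝ (Fin d)) (εtilde : ℝ)
    (hεtilde : εtilde = max εhat (G x))
    (σstar2 M : ℝ)
    (hσstar2 : σstar2 = sSup (V '' {y | G y ≤ εtilde}))
    (hM : M = sSup ((fun y => V y / G y) '' {y | εtilde < G y}))
    (hbdd : BddAbove (Set.range bhat)) :
    1 + σstar2 / εtilde + M ≤ 4 * sSup (Set.range bhat) := by
  set S := sSup (Set.range bhat) with hS
  have hεhat_le : εhat ≤ εtilde := hεtilde ▸ le_max_left _ _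
  have hεtilde_pos : 0 < εtilde := lt_of_lt_of_le hεhat hεhat_le
  -- every bhat y ≤ S
  have hle : ∀ y, bhat y ≤ S := fun y => le_csSup hbdd (Set.mem_range_self y)
  -- S ≥ 1
  have hS1 : 1 ≤ S := by
    refine le_trans ?_ (hle x)
    rw [hbhat]
    have hpos : 0 < G x + εhat := by linarith [hG x]
    have : 0 ≤ V x / (G x + εhat) := div_nonneg (hV x) hpos.le
    linarith
  -- bound on σstar2
  have hσ : σstar2 ≤ 2 * εtilde * (S - 1) := by
    rw [hσstar2]
    refine Real.sSup_le ?_ (by nlinarith)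
    rintro v ⟨y, hy, rfl⟩
    have hyb := hle y
    rw [hbhat] at hyb
    have hden : 0 < G y + εhat := by linarith [hG y]
    have hden2 : G y + εhat ≤ 2 * εtilde := by
      have : G y ≤ εtilde := hy
      linarith
    have h1 : V y / (G y + εhat) ≤ S - 1 := by linarith
    have h2 : V y ≤ (S - 1) * (G y + εhat) := by
      rwa [div_le_iff₀ hden] at h1
    nlinarith [hV y, hG y]
  -- bound on M
  have hMb : M ≤ 2 * (S - 1) := by
    rw [hM]
    refine Real.sSup_le ?_ (by nlinarith)
    rintro v ⟨y, hy, rfl⟩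
    have hyG : εtilde < G y := hy
    have hGy : 0 < G y := lt_trans hεtilde_pos hyG
    have hyb := hle y
    rw [hbhat] at hyb
    have hden : 0 < G y + εhat := by linarith [hG y]
    have h1 : V y / (G y + εhat) ≤ S - 1 := by linarith
    have h2 : V y ≤ (S - 1) * (G y + εhat) := by rwa [div_le_iff₀ hden] at h1
    have hden2 : G y + εhat ≤ 2 * G y := by linarith
    have h3 : V y ≤ 2 * (S - 1) * G y := by nlinarith [hV y]
    rw [div_le_iff₀ hGy]
    linarith
  have hσd : σstar2 / εtilde ≤ 2 * (S - 1) := by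
    rw [div_le_iff₀ hεtilde_pos]
    nlinarith
  linarith
end
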